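/- (Associativity of substitution.) Let T be a tubing of a finite connected simple graph Γ, let t ∈ T, let S be a tubing of (Γ_t)_{T|_t}^*, and let s be a proper tube of S. Set s̃ := s ∪ (the union of the maximal proper tubes of T|_t linked in Γ_t to s), a tube of γ_t(T;S). Then for any tubing W of the graph (((Γ_t)_{T|_t}^*)_s)_{S|_s}^*, the family γ_s(S;W) is a tubing of (Γ_t)_{T|_t}^*, and γ_t(T; γ_s(S;W)) = γ_{s̃}(γ_t(T;S); W). -/

import Mathlib

open scoped Classical
open TensorProduct

noncomputable section

/-- A finite simple graph whose vertices are a finite set of (totally ordered) naturals. -/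
structure FinGraph : Type where
  verts : Finset ℕ
  Adj : ℕ → ℕ → Prop
  symm : ∀ v w, Adj v w → Adj w v
  loopless : ∀ v, ¬ Adj v v
  support : ∀ v w, Adj v w → v ∈ verts ∧ w ∈ verts

namespace CDTub

/-- Connectivity of a vertex set within a graph: any two of its vertices are joined by a
walk staying inside the set. -/
def VConn (G : FinGraph) (s : Finset ℕ) : Prop :=
  ∀ v ∈ s, ∀ w ∈ s, Relation.ReflTransGen (fun a b => a ∈ s ∧ b ∈ s ∧ G.Adj a b) v w

/-- A tube: a nonempty set of vertices inducing a connected subgraph. -/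
def IsTube (G : FinGraph) (t : Finset ℕ) : Prop :=
  t.Nonempty ∧ t ⊆ G.verts ∧ VConn G t

/-- A connected (nonempty) graph: the universal tube is a tube. -/
def IsConnGraph (G : FinGraph) : Prop := IsTube G G.verts

/-- Two vertex sets are far apart: disjoint and with no edge between them. -/
def FarApart (G : FinGraph) (a b : Finset ℕ) : Prop :=
  Disjoint a b ∧ ¬ ∃ v ∈ a, ∃ w ∈ b, G.Adj v w

/-- Compatible tubes: nested or far apart. -/
def Compatible (G : FinGraph) (a b : Finset ℕ) : Prop :=
  a ⊆ b ∨ b ⊆ a ∨ FarApart G a b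

/-- Linked tubes: disjoint and joined by an edge. -/
def Linked (G : FinGraph) (a b : Finset ℕ) : Prop :=
  Disjoint a b ∧ ∃ v ∈ a, ∃ w ∈ b, G.Adj v w

/-- A tubing of a connected graph: pairwise compatible tubes containing the universal tube. -/
def IsTubing (G : FinGraph) (T : Finset (Finset ℕ)) : Prop :=
  G.verts ∈ T ∧ (∀ t ∈ T, IsTube G t) ∧
    ∀ t ∈ T, ∀ t' ∈ T, t ≠ t' → Compatible G t t'

/-- Induced subgraph on a set of vertices. -/
def induce (G : FinGraph) (t : Finset ℕ) : FinGraph where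
  verts := t
  Adj v w := v ∈ t ∧ w ∈ t ∧ G.Adj v w
  symm := fun v w h => ⟨h.2.1, h.1, G.symm v w h.2.2⟩
  loopless := fun v h => G.loopless v h.2.2
  support := fun _ _ h => ⟨h.1, h.2.1⟩

/-- Simultaneous reconnected complement with respect to a family `F` of tubes
(for a single tube, or a family of pairwise far apart tubes, this is the (iterated)
reconnected complement). -/
def reconnAll (G : FinGraph) (F : Finset (Finset ℕ)) : FinGraph where
  verts := G.verts \ F.biUnion id
  Adj v w := v ≠ w ∧ v ∈ G.verts \ F.biUnion id ∧ w ∈ G.verts \ F.biUnion id ∧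
    (G.Adj v w ∨ ∃ f ∈ F, (∃ u ∈ f, G.Adj v u) ∧ ∃ u' ∈ f, G.Adj w u')
  symm := by
    rintro v w ⟨hne, hv, hw, h⟩
    refine ⟨hne.symm, hw, hv, ?_⟩
    rcases h with h | ⟨f, hf, h1, h2⟩
    · exact Or.inl (G.symm _ _ h)
    · exact Or.inr ⟨f, hf, h2, h1⟩
  loopless := fun v h => h.1 rfl
  support := fun _ _ h => ⟨h.2.1, h.2.2.1⟩

/-- Reconnected complement `Γ_t^*` of a graph with respect to a tube. -/
def reconn (G : FinGraph) (t : Finset ℕ) : FinGraph := reconnAll G {t}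

/-- The proper tubes of a tubing. -/
def properTubes (G : FinGraph) (T : Finset (Finset ℕ)) : Finset (Finset ℕ) :=
  T.filter (fun s => s ≠ G.verts)

/-- The maximal proper tubes of a tubing. -/
def MaxtP (G : FinGraph) (T : Finset (Finset ℕ)) : Finset (Finset ℕ) :=
  (properTubes G T).filter (fun s => ∀ s' ∈ properTubes G T, s ⊆ s' → s = s')

/-- The iterated reconnected complement `Γ_T^*` with respect to the maximal proper tubes. -/
def gammaStar (G : FinGraph) (T : Finset (Finset ℕ)) : FinGraph :=
  reconnAll G (MaxtP G T)

/-- Restriction `T|_t` of a tubing to a tube. -/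
def restrictT (T : Finset (Finset ℕ)) (t : Finset ℕ) : Finset (Finset ℕ) :=
  T.filter (fun s => s ⊆ t)

/-- For a tube `s` of `Γ_T^*`, the tube `s̃` of `Γ`: the union of `s` with all maximal
proper tubes of `T` linked to `s`. -/
def tildeT (G : FinGraph) (T : Finset (Finset ℕ)) (s : Finset ℕ) : Finset ℕ :=
  s ∪ ((MaxtP G T).filter (fun m => Linked G m s)).biUnion id

/-- Substitution `T •_Γ S` of a tubing `S` of `Γ_T^*` into the tubing `T`. -/
def substT (G : FinGraph) (T S : Finset (Finset ℕ)) : Finset (Finset ℕ) :=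
  T ∪ S.image (tildeT G T)

/-- The `t`-substitution `γ_t(T;S) = T ∪ (T|_t •_{Γ_t} S)`. -/
def gammaSub (G : FinGraph) (T : Finset (Finset ℕ)) (t : Finset ℕ)
    (S : Finset (Finset ℕ)) : Finset (Finset ℕ) :=
  T ∪ substT (induce G t) (restrictT T t) S

/-- The tubing `T_t^*` induced on the reconnected complement `Γ_t^*`. -/
def indStar (T : Finset (Finset ℕ)) (t : Finset ℕ) : Finset (Finset ℕ) :=
  T.filter (fun s => Disjoint s t) ∪ (T.filter (fun s => t ⊂ s)).image (fun s => s \ t)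

/-- The operation `T ◇ S` of Definition 2.4(2). -/
def diamond (G : FinGraph) (T : Finset (Finset ℕ)) (t : Finset ℕ)
    (S : Finset (Finset ℕ)) : Finset (Finset ℕ) :=
  T ∪ S.filter (fun s => ¬ Linked G s t) ∪
    (S.filter (fun s => Linked G s t)).image (fun s => s ∪ t)

/-- The tubes of `T`, viewed as subsets of the subtype of vertices. -/
def tubeSets (G : FinGraph) (T : Finset (Finset ℕ)) : Set (Set {x // x ∈ G.verts}) :=
  {U | ∃ t ∈ T, U = {x : {x // x ∈ G.verts} | (x : ℕ) ∈ t}}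

/-- The topology on the vertex set generated by the tubes of `T`. -/
def tubingTop (G : FinGraph) (T : Finset (Finset ℕ)) :
    TopologicalSpace {x // x ∈ G.verts} :=
  TopologicalSpace.generateFrom (tubeSets G T)

/-- One-line notation of the permutation `σ_t`: the vertices of `t` in increasing order
followed by the remaining vertices in increasing order. -/
def sigmaList (X t : Finset ℕ) : List ℕ :=
  t.sort (· ≤ ·) ++ (X \ t).sort (· ≤ ·)

/-- Number of `Γ`-inversions of a permutation given by its one-line notation `l`:
pairs of positions `p < q` carrying values `a > b` which form an edge of `Γ`. -/
def invCount (G : FinGraph) (l : List ℕ) : ℕ :=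
  ((Finset.range l.length ×ˢ Finset.range l.length).filter
    (fun pq => pq.1 < pq.2 ∧ l.getD pq.2 0 < l.getD pq.1 0 ∧
      G.Adj (l.getD pq.1 0) (l.getD pq.2 0))).card

/-- The signature `sgn^Γ(σ) = (-1)^{inv_Γ(σ)}`. -/
def graphSgn (G : FinGraph) (l : List ℕ) : ℤ := (-1) ^ invCount G l

/-- Rank (1-based) of `v` inside a finite set `X` of naturals: the order-preserving
relabelling of `X` by `{1,…,|X|}`. -/
def rk (X : Finset ℕ) (v : ℕ) : ℕ := (X.filter (fun u => u ≤ v)).card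

/-- Order-preserving relabelling of a graph by the initial segment `{1,…,n}`. -/
def relabelG (G : FinGraph) : FinGraph where
  verts := G.verts.image (rk G.verts)
  Adj i j := i ≠ j ∧ ∃ v w, G.Adj v w ∧ i = rk G.verts v ∧ j = rk G.verts w
  symm := by
    rintro i j ⟨hne, v, w, h, hi, hj⟩
    exact ⟨hne.symm, w, v, G.symm _ _ h, hj, hi⟩
  loopless := fun _ h => h.1 rfl
  support := by
    rintro i j ⟨hne, v, w, h, hi, hj⟩
    exact ⟨Finset.mem_image.mpr ⟨v, (G.support _ _ h).1, hi.symm⟩,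
      Finset.mem_image.mpr ⟨w, (G.support _ _ h).2, hj.symm⟩⟩

/-- Order-preserving relabelling of a subset of `X`. -/
def relabelF (X t : Finset ℕ) : Finset ℕ := t.image (rk X)

/-- Order-preserving relabelling of a family of subsets of `X`. -/
def relabelT (X : Finset ℕ) (T : Finset (Finset ℕ)) : Finset (Finset ℕ) :=
  T.image (relabelF X)

/-- Connected components (in `G`) of a set of vertices. -/
def comps (G : FinGraph) (s : Finset ℕ) : Finset (Finset ℕ) :=
  s.image (fun v => s.filter (fun w =>
    Relation.ReflTransGen (fun a b => a ∈ s ∧ b ∈ s ∧ G.Adj a b) v w))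

/-- The restriction map `res_Ω^Γ` on tubings: replace each tube by its connected
components in `Ω`. -/
def resT (Om : FinGraph) (T : Finset (Finset ℕ)) : Finset (Finset ℕ) :=
  T.biUnion (comps Om)

/-- Shift of a vertex set by `n`. -/
def shiftF (n : ℕ) (s : Finset ℕ) : Finset ℕ := s.image (fun v => v + n)

/-- Shift of a family of vertex sets by `n`. -/
def shiftT (n : ℕ) (S : Finset (Finset ℕ)) : Finset (Finset ℕ) := S.image (shiftF n)

/-- Shift of a graph by `n`. -/
def shiftG (n : ℕ) (G : FinGraph) : FinGraph where
  verts := shiftF n G.verts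
  Adj v w := ∃ a b, G.Adj a b ∧ v = a + n ∧ w = b + n
  symm := by
    rintro v w ⟨a, b, h, rfl, rfl⟩
    exact ⟨b, a, G.symm _ _ h, rfl, rfl⟩
  loopless := by
    rintro v ⟨a, b, h, ha, hb⟩
    have : a = b := by omega
    exact G.loopless b (this ▸ h)
  support := by
    rintro v w ⟨a, b, h, rfl, rfl⟩
    exact ⟨Finset.mem_image.mpr ⟨a, (G.support _ _ h).1, rfl⟩,
      Finset.mem_image.mpr ⟨b, (G.support _ _ h).2, rfl⟩⟩

/-- `X_T` : the vertices belonging to no proper tube of `T`. -/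
def freeVerts (G : FinGraph) (T : Finset (Finset ℕ)) : Finset ℕ :=
  G.verts.filter (fun v => ∀ s ∈ T, s ≠ G.verts → v ∉ s)

/-- The endpoint `max X_T` of the joining edge. -/
def joinA (G : FinGraph) (T : Finset (Finset ℕ)) : ℕ :=
  WithBot.unbotD 0 (freeVerts G T).max

/-- The endpoint `n + min X_S` of the joining edge. -/
def joinB (Om : FinGraph) (S : Finset (Finset ℕ)) (n : ℕ) : ℕ :=
  n + WithTop.untopD 0 (freeVerts Om S).min

/-- Vertex set of the joined graph `Γ ∪_{T,S} Ω`. -/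
def joinVerts (G Om : FinGraph) (n : ℕ) : Finset ℕ := G.verts ∪ shiftF n Om.verts

/-- The joined graph `Γ ∪_{T,S} Ω`: the disjoint union (with `Ω` shifted by `n`)
plus one edge from `max X_T` to `n + min X_S`. -/
def joinG (G Om : FinGraph) (T S : Finset (Finset ℕ)) (n : ℕ) : FinGraph where
  verts := joinVerts G Om n
  Adj v w := G.Adj v w ∨ (shiftG n Om).Adj v w ∨
    (v ≠ w ∧ v ∈ joinVerts G Om n ∧ w ∈ joinVerts G Om n ∧
      ((v = joinA G T ∧ w = joinB Om S n) ∨ (w = joinA G T ∧ v = joinB Om S n)))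
  symm := by
    rintro v w (h | h | ⟨hne, hv, hw, hc⟩)
    · exact Or.inl (G.symm _ _ h)
    · exact Or.inr (Or.inl ((shiftG n Om).symm _ _ h))
    · exact Or.inr (Or.inr ⟨hne.symm, hw, hv, hc.symm⟩)
  loopless := by
    rintro v (h | h | ⟨hne, _⟩)
    · exact G.loopless v h
    · exact (shiftG n Om).loopless v h
    · exact hne rfl
  support := by
    rintro v w (h | h | ⟨_, hv, hw, _⟩)
    · exact ⟨Finset.mem_union_left _ (G.support _ _ h).1,
        Finset.mem_union_left _ (G.support _ _ h).2⟩
    · exact ⟨Finset.mem_union_right _ ((shiftG n Om).support _ _ h).1,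
        Finset.mem_union_right _ ((shiftG n Om).support _ _ h).2⟩
    · exact ⟨hv, hw⟩

/-- `T ▷ S`. -/
def trR (G Om : FinGraph) (T S : Finset (Finset ℕ)) (n : ℕ) : Finset (Finset ℕ) :=
  T ∪ shiftT n (properTubes Om S) ∪ {joinVerts G Om n}

/-- `T ◁ S`. -/
def trL (G Om : FinGraph) (T S : Finset (Finset ℕ)) (n : ℕ) : Finset (Finset ℕ) :=
  properTubes G T ∪ shiftT n S ∪ {joinVerts G Om n}

/-- `T ⊥ S`. -/
def tPerp (G Om : FinGraph) (T S : Finset (Finset ℕ)) (n : ℕ) : Finset (Finset ℕ) :=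
  properTubes G T ∪ shiftT n (properTubes Om S) ∪ {joinVerts G Om n}

/-- Equality of graphs: same vertex set and same edges. -/
def GEq (A B : FinGraph) : Prop :=
  A.verts = B.verts ∧ ∀ v w, A.Adj v w ↔ B.Adj v w

/-- Index type for the basis of `Tub⁺`: `none` is the unit `1`, `some (Γ,T)` is a pair. -/
abbrev TubIdx : Type := Option (FinGraph × Finset (Finset ℕ))

/-- A pair `(Γ,T)` relabelled order-preservingly to standard vertex set, identified
with the unit `1` when the vertex set is empty. -/
def embPair (G : FinGraph) (T : Finset (Finset ℕ)) : TubIdx :=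
  if G.verts = ∅ then none else some (relabelG G, relabelT G.verts T)

/-- The value of the pre-Lie coproduct `Δ_•` on a basis element. -/
def deltaFun (K : Type) [CommRing K] (i : TubIdx) :
    (TubIdx →₀ K) ⊗[K] (TubIdx →₀ K) :=
  match i with
  | none => Finsupp.single (none : TubIdx) (1 : K) ⊗ₜ[K] Finsupp.single (none : TubIdx) (1 : K)
  | some (G, T) =>
      (∑ t ∈ T, (Finsupp.single (embPair (induce G t) (restrictT T t)) (1 : K)) ⊗ₜ[K]
        (Finsupp.single (embPair (reconn G t) (indStar T t)) (1 : K)))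
      + (Finsupp.single (none : TubIdx) (1 : K)) ⊗ₜ[K]
          (Finsupp.single (some (G, T) : TubIdx) (1 : K))

/-- The pre-Lie coproduct `Δ_•` on `Tub⁺`, the free module on `TubIdx`. -/
def delta (K : Type) [CommRing K] :
    (TubIdx →₀ K) →ₗ[K] (TubIdx →₀ K) ⊗[K] (TubIdx →₀ K) :=
  Finsupp.lift ((TubIdx →₀ K) ⊗[K] (TubIdx →₀ K)) K TubIdx (deltaFun K)

end CDTub

/-!
Write `H = Γ_t`, `U = T|_t` and `K = H_U^*`. The map `x ↦ x̃` adds to a vertex set of `K` the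
maximal tubes of `U` linked to it. An edge of `K` is either an edge of `H` or runs through a
maximal tube of `U`, and `x̃` absorbs every such tube that touches `x`; hence `x̃` is connected
when `x` is, `x̃` and `w` are linked in `H` exactly when `x` and `w` are linked in `K`, and far
apart tubes of `K` have far apart tildes. Applied inside `K_s`, this makes `γ_s(S;W)` a tubing.

Both sides of the equation consist of `T`, the tubes `x̃` for `x ∈ S`, and one tube for each
`w ∈ W`, so it remains to compare the two tubes attached to `w`. On the right it is `w`
together with the maximal proper tubes of `γ_t(T;S)|_{s̃}` linked to `w`; these are the tubes
`m̃` for `m` maximal proper in `S|_s`, and the maximal tubes of `U` that are linked to `s` but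
to none of those `m`. Sorting the maximal tubes of `U` linked to `w̃^{S|_s}` into these two
kinds then identifies the left-hand tube `(w̃^{S|_s})^~` with it.
-/

namespace CDTub

section Graphs

variable {G : FinGraph}

theorem FarApart.symm {a b : Finset ℕ} (h : FarApart G a b) : FarApart G b a :=
  ⟨h.1.symm, fun ⟨v, hv, w, hw, hvw⟩ => h.2 ⟨w, hw, v, hv, G.symm _ _ hvw⟩⟩

theorem farApart_symm_iff {a b : Finset ℕ} : FarApart G a b ↔ FarApart G b a :=
  ⟨FarApart.symm, FarApart.symm⟩

theorem FarApart.mono_left {a a' b : Finset ℕ} (h : FarApart G a b) (ha : a' ⊆ a) :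
    FarApart G a' b :=
  ⟨h.1.mono_left ha, fun ⟨v, hv, w, hw, hvw⟩ => h.2 ⟨v, ha hv, w, hw, hvw⟩⟩

theorem FarApart.mono_right {a b b' : Finset ℕ} (h : FarApart G a b) (hb : b' ⊆ b) :
    FarApart G a b' :=
  (h.symm.mono_left hb).symm

theorem Compatible.symm {a b : Finset ℕ} (h : Compatible G a b) : Compatible G b a := by
  rcases h with h | h | h
  exacts [Or.inr (Or.inl h), Or.inl h, Or.inr (Or.inr h.symm)]

theorem farApart_iff_not_linked {a b : Finset ℕ} :
    FarApart G a b ↔ Disjoint a b ∧ ¬ Linked G a b :=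
  ⟨fun ⟨hd, h⟩ => ⟨hd, fun hl => h hl.2⟩, fun ⟨hd, h⟩ => ⟨hd, fun he => h ⟨hd, he⟩⟩⟩

theorem farApart_iff {a b : Finset ℕ} :
    FarApart G a b ↔ Disjoint a b ∧ ∀ v ∈ a, ∀ w ∈ b, ¬ G.Adj v w := by
  simp only [FarApart, not_exists, not_and]

theorem farApart_union_left {a b c : Finset ℕ} :
    FarApart G (a ∪ b) c ↔ FarApart G a c ∧ FarApart G b c := by
  simp only [farApart_iff, Finset.disjoint_union_left, Finset.mem_union, or_imp, forall_and]
  tauto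

theorem farApart_union_right {a b c : Finset ℕ} :
    FarApart G a (b ∪ c) ↔ FarApart G a b ∧ FarApart G a c := by
  rw [farApart_symm_iff, farApart_union_left, farApart_symm_iff (a := b),
    farApart_symm_iff (a := c)]

theorem farApart_biUnion_left {F : Finset (Finset ℕ)} {c : Finset ℕ} :
    FarApart G (F.biUnion id) c ↔ ∀ f ∈ F, FarApart G f c := by
  simp only [farApart_iff, Finset.disjoint_biUnion_left, Finset.mem_biUnion, id]
  grind

theorem farApart_biUnion_right {F : Finset (Finset ℕ)} {c : Finset ℕ} :
    FarApart G c (F.biUnion id) ↔ ∀ f ∈ F, FarApart G c f := by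
  rw [farApart_symm_iff, farApart_biUnion_left]
  exact forall₂_congr fun _ _ => farApart_symm_iff

theorem Linked.mono_left {a a' b : Finset ℕ} (h : Linked G a b) (ha : a ⊆ a')
    (hd : Disjoint a' b) : Linked G a' b :=
  let ⟨_, v, hv, w, hw, hvw⟩ := h
  ⟨hd, v, ha hv, w, hw, hvw⟩

theorem Linked.mono_right {a b b' : Finset ℕ} (h : Linked G a b) (hb : b ⊆ b')
    (hd : Disjoint a b') : Linked G a b' :=
  let ⟨_, v, hv, w, hw, hvw⟩ := h
  ⟨hd, v, hv, w, hb hw, hvw⟩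

abbrev ReachIn (G : FinGraph) (s : Finset ℕ) : ℕ → ℕ → Prop :=
  Relation.ReflTransGen (fun a b => a ∈ s ∧ b ∈ s ∧ G.Adj a b)

theorem ReachIn.adj {s : Finset ℕ} {v w : ℕ} (hv : v ∈ s) (hw : w ∈ s) (h : G.Adj v w) :
    ReachIn G s v w :=
  .single ⟨hv, hw, h⟩

theorem ReachIn.symm {s : Finset ℕ} {v w : ℕ} (h : ReachIn G s v w) : ReachIn G s w v := by
  induction h with
  | refl => exact .refl
  | tail _ hbc ih => exact .head ⟨hbc.2.1, hbc.1, G.symm _ _ hbc.2.2⟩ ih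

theorem ReachIn.mono {s s' : Finset ℕ} (hs : s ⊆ s') {v w : ℕ} (h : ReachIn G s v w) :
    ReachIn G s' v w :=
  Relation.ReflTransGen.mono (fun _ _ hab => ⟨hs hab.1, hs hab.2.1, hab.2.2⟩) _ _ h

theorem vConn_of_reachIn {s a : Finset ℕ} (ha : ∀ v ∈ a, ∀ w ∈ a, ReachIn G s v w)
    (hs : ∀ v ∈ s, ∃ z ∈ a, ReachIn G s v z) : VConn G s := by
  intro v hv w hw
  obtain ⟨z, hz, hvz⟩ := hs v hv
  obtain ⟨z', hz', hwz'⟩ := hs w hw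
  exact (hvz.trans (ha z hz z' hz')).trans hwz'.symm

theorem induce_induce {t r : Finset ℕ} (h : r ⊆ t) : induce (induce G t) r = induce G r := by
  simp only [induce, FinGraph.mk.injEq, true_and]
  funext v w
  exact propext ⟨fun ⟨hv, hw, _, _, hvw⟩ => ⟨hv, hw, hvw⟩,
    fun ⟨hv, hw, hvw⟩ => ⟨hv, hw, h hv, h hw, hvw⟩⟩

theorem vConn_induce_iff {t r : Finset ℕ} (h : r ⊆ t) : VConn (induce G t) r ↔ VConn G r := by
  have hrel : (fun a b => a ∈ r ∧ b ∈ r ∧ (induce G t).Adj a b) =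
      fun a b => a ∈ r ∧ b ∈ r ∧ G.Adj a b := by
    funext a b
    exact propext ⟨fun ⟨ha, hb, _, _, hab⟩ => ⟨ha, hb, hab⟩,
      fun ⟨ha, hb, hab⟩ => ⟨ha, hb, h ha, h hb, hab⟩⟩
  simp only [VConn, hrel]

theorem isTube_induce_iff {t r : Finset ℕ} (ht : t ⊆ G.verts) :
    IsTube (induce G t) r ↔ IsTube G r ∧ r ⊆ t := by
  constructor
  · rintro ⟨hne, hrt, hr⟩
    exact ⟨⟨hne, hrt.trans ht, (vConn_induce_iff hrt).mp hr⟩, hrt⟩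
  · rintro ⟨⟨hne, -, hr⟩, hrt⟩
    exact ⟨hne, hrt, (vConn_induce_iff hrt).mpr hr⟩

theorem linked_induce_iff {t a b : Finset ℕ} (ha : a ⊆ t) (hb : b ⊆ t) :
    Linked (induce G t) a b ↔ Linked G a b := by
  constructor <;> rintro ⟨hd, v, hv, w, hw, hvw⟩
  · exact ⟨hd, v, hv, w, hw, hvw.2.2⟩
  · exact ⟨hd, v, hv, w, hw, ha hv, hb hw, hvw⟩

theorem compatible_induce_iff {t a b : Finset ℕ} (ha : a ⊆ t) (hb : b ⊆ t) :
    Compatible (induce G t) a b ↔ Compatible G a b := by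
  simp only [Compatible, farApart_iff_not_linked, linked_induce_iff ha hb]

theorem IsTubing.restrictT {T : Finset (Finset ℕ)} (hT : IsTubing G T) {t : Finset ℕ}
    (ht : t ∈ T) : IsTubing (induce G t) (restrictT T t) := by
  have htv : t ⊆ G.verts := (hT.2.1 t ht).2.1
  simp only [IsTubing, CDTub.restrictT, Finset.mem_filter]
  refine ⟨⟨ht, subset_rfl⟩, fun r ⟨hr, hrt⟩ => (isTube_induce_iff htv).mpr ⟨hT.2.1 r hr, hrt⟩,
    fun r ⟨hr, hrt⟩ r' ⟨hr', hr't⟩ hne => ?_⟩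
  exact (compatible_induce_iff hrt hr't).mpr (hT.2.2 r hr r' hr' hne)

end Graphs

section MaximalTubes

variable {G : FinGraph} {T : Finset (Finset ℕ)}

theorem mem_properTubes {r : Finset ℕ} : r ∈ properTubes G T ↔ r ∈ T ∧ r ≠ G.verts :=
  Finset.mem_filter

theorem mem_maxtP {m : Finset ℕ} : m ∈ MaxtP G T ↔
    m ∈ properTubes G T ∧ ∀ r ∈ properTubes G T, m ⊆ r → m = r :=
  Finset.mem_filter

theorem mem_restrictT {t r : Finset ℕ} : r ∈ restrictT T t ↔ r ∈ T ∧ r ⊆ t :=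
  Finset.mem_filter

theorem restrictT_union {A B : Finset (Finset ℕ)} {t : Finset ℕ} :
    restrictT (A ∪ B) t = restrictT A t ∪ restrictT B t :=
  Finset.filter_union _ _ _

theorem maxtP_subset : MaxtP G T ⊆ T := fun _ hm => (mem_properTubes.mp (mem_maxtP.mp hm).1).1

theorem exists_mem_maxtP_superset {r : Finset ℕ} (hr : r ∈ properTubes G T) :
    ∃ m ∈ MaxtP G T, r ⊆ m := by
  obtain ⟨m, hrm, hm⟩ := (properTubes G T).exists_le_maximal hr
  exact ⟨m, mem_maxtP.mpr ⟨hm.1, fun r' hr' hmr' => (hm.2 hr' hmr').antisymm' hmr'⟩, hrm⟩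

theorem maxtP_eq_of_cofinal {C : Finset (Finset ℕ)} (hC : C ⊆ properTubes G T)
    (hcof : ∀ r ∈ properTubes G T, ∃ c ∈ C, r ⊆ c)
    (hanti : ∀ c ∈ C, ∀ c' ∈ C, c ⊆ c' → c = c') : MaxtP G T = C := by
  ext m
  constructor
  · intro hm
    obtain ⟨c, hc, hmc⟩ := hcof m (mem_maxtP.mp hm).1
    rwa [(mem_maxtP.mp hm).2 c (hC hc) hmc]
  · intro hm
    refine mem_maxtP.mpr ⟨hC hm, fun r hr hmr => ?_⟩
    obtain ⟨c, hc, hrc⟩ := hcof r hr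
    exact hmr.antisymm (hanti m hm c hc (hmr.trans hrc) ▸ hrc)

theorem IsTubing.farApart_of_mem_maxtP (hT : IsTubing G T) {m m' : Finset ℕ}
    (hm : m ∈ MaxtP G T) (hm' : m' ∈ MaxtP G T) (hne : m ≠ m') : FarApart G m m' := by
  rw [mem_maxtP] at hm hm'
  rcases hT.2.2 m (mem_properTubes.mp hm.1).1 m' (mem_properTubes.mp hm'.1).1 hne with
    h | h | h
  · exact absurd (hm.2 m' hm'.1 h) hne
  · exact absurd (hm'.2 m hm.1 h).symm hne
  · exact h

theorem IsTubing.eq_of_mem_maxtP (hT : IsTubing G T) {m m' : Finset ℕ}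
    (hm : m ∈ MaxtP G T) (hm' : m' ∈ MaxtP G T) {a : ℕ} (ha : a ∈ m) (ha' : a ∈ m') :
    m = m' := by
  by_contra hne
  exact Finset.disjoint_left.mp (hT.farApart_of_mem_maxtP hm hm' hne).1 ha ha'

end MaximalTubes

section Tilde

variable {H : FinGraph} {U : Finset (Finset ℕ)}

theorem gammaStar_verts_subset : (gammaStar H U).verts ⊆ H.verts := Finset.sdiff_subset

theorem disjoint_gammaStar_verts {m : Finset ℕ} (hm : m ∈ MaxtP H U) :
    Disjoint m (gammaStar H U).verts :=
  Finset.disjoint_left.mpr fun _ ha ha' =>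
    (Finset.mem_sdiff.mp ha').2 (Finset.mem_biUnion.mpr ⟨m, hm, ha⟩)

theorem mem_tildeT {x : Finset ℕ} {a : ℕ} :
    a ∈ tildeT H U x ↔ a ∈ x ∨ ∃ m ∈ MaxtP H U, Linked H m x ∧ a ∈ m := by
  simp [tildeT, and_assoc]

theorem subset_tildeT (x : Finset ℕ) : x ⊆ tildeT H U x := Finset.subset_union_left

theorem subset_tildeT_of_linked {m x : Finset ℕ} (hm : m ∈ MaxtP H U) (h : Linked H m x) :
    m ⊆ tildeT H U x :=
  fun _ ha => mem_tildeT.mpr (Or.inr ⟨m, hm, h, ha⟩)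

theorem mem_of_mem_tildeT {x : Finset ℕ} {a : ℕ} (ha : a ∈ tildeT H U x)
    (ha' : a ∈ (gammaStar H U).verts) : a ∈ x := by
  rcases mem_tildeT.mp ha with h | ⟨m, hm, -, ham⟩
  · exact h
  · exact absurd ha' (Finset.disjoint_left.mp (disjoint_gammaStar_verts hm) ham)

theorem tildeT_subset_verts (hU : IsTubing H U) {x : Finset ℕ}
    (hx : x ⊆ (gammaStar H U).verts) : tildeT H U x ⊆ H.verts := by
  intro a ha
  rcases mem_tildeT.mp ha with h | ⟨m, hm, -, ham⟩
  · exact gammaStar_verts_subset (hx h)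
  · exact (hU.2.1 m (maxtP_subset hm)).2.1 ham

theorem disjoint_tildeT {x w : Finset ℕ} (hw : w ⊆ (gammaStar H U).verts)
    (hxw : Disjoint x w) : Disjoint (tildeT H U x) w := by
  refine Finset.disjoint_left.mpr fun a ha haw => ?_
  rcases mem_tildeT.mp ha with h | ⟨m, hm, -, ham⟩
  · exact Finset.disjoint_left.mp hxw h haw
  · exact Finset.disjoint_left.mp (disjoint_gammaStar_verts hm) ham (hw haw)

theorem tildeT_mono {x x' : Finset ℕ} (hx' : x' ⊆ (gammaStar H U).verts) (h : x ⊆ x') :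
    tildeT H U x ⊆ tildeT H U x' := by
  intro a ha
  rcases mem_tildeT.mp ha with hax | ⟨m, hm, hmx, ham⟩
  · exact subset_tildeT x' (h hax)
  · exact subset_tildeT_of_linked hm
      (hmx.mono_right h ((disjoint_gammaStar_verts hm).mono_right hx')) ham

theorem tildeT_subset_tildeT_iff {x x' : Finset ℕ} (hx : x ⊆ (gammaStar H U).verts)
    (hx' : x' ⊆ (gammaStar H U).verts) : tildeT H U x ⊆ tildeT H U x' ↔ x ⊆ x' :=
  ⟨fun h _ ha => mem_of_mem_tildeT (h (subset_tildeT x ha)) (hx ha), tildeT_mono hx'⟩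

theorem exists_maxtP_linked_of_subset_tildeT (hU : IsTubing H U) {r x : Finset ℕ}
    (hr : r ∈ properTubes H U) (hx : x ⊆ (gammaStar H U).verts) (hrx : r ⊆ tildeT H U x) :
    ∃ m ∈ MaxtP H U, Linked H m x ∧ r ⊆ m := by
  obtain ⟨m, hm, hrm⟩ := exists_mem_maxtP_superset hr
  obtain ⟨a, ha⟩ := (hU.2.1 r (mem_properTubes.mp hr).1).1
  rcases mem_tildeT.mp (hrx ha) with hax | ⟨m', hm', hm'x, ham'⟩
  · exact absurd (hx hax) (Finset.disjoint_left.mp (disjoint_gammaStar_verts hm) (hrm ha))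
  · exact ⟨m, hm, hU.eq_of_mem_maxtP hm hm' (hrm ha) ham' ▸ hm'x, hrm⟩

theorem linked_of_subset_tildeT (hU : IsTubing H U) {m x : Finset ℕ} (hm : m ∈ MaxtP H U)
    (hx : x ⊆ (gammaStar H U).verts) (h : m ⊆ tildeT H U x) : Linked H m x := by
  obtain ⟨m', hm', hm'x, hmm'⟩ :=
    exists_maxtP_linked_of_subset_tildeT hU (mem_maxtP.mp hm).1 hx h
  rwa [(mem_maxtP.mp hm).2 m' (mem_maxtP.mp hm').1 hmm']

theorem FarApart.of_gammaStar {x x' : Finset ℕ} (hx : x ⊆ (gammaStar H U).verts)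
    (hx' : x' ⊆ (gammaStar H U).verts) (h : FarApart (gammaStar H U) x x') :
    FarApart H x x' := by
  refine ⟨h.1, fun ⟨v, hv, w, hw, hvw⟩ => h.2 ⟨v, hv, w, hw, ?_, hx hv, hx' hw, Or.inl hvw⟩⟩
  rintro rfl
  exact Finset.disjoint_left.mp h.1 hv hw

/-- An edge of `Γ_T^*` leaving `x` either is an edge of `Γ` or passes through a maximal tube
linked to `x`, which `tildeT` absorbs. -/
theorem linked_tildeT_iff {x w : Finset ℕ} (hx : x ⊆ (gammaStar H U).verts)
    (hw : w ⊆ (gammaStar H U).verts) :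
    Linked H (tildeT H U x) w ↔ Linked (gammaStar H U) x w := by
  constructor
  · rintro ⟨hd, p, hp, q, hq, hpq⟩
    have hxw : Disjoint x w := hd.mono_left (subset_tildeT x)
    rcases mem_tildeT.mp hp with hpx | ⟨m, hm, ⟨-, a, ham, b, hbx, hab⟩, hpm⟩
    · refine ⟨hxw, p, hpx, q, hq, ?_, hx hpx, hw hq, Or.inl hpq⟩
      rintro rfl
      exact Finset.disjoint_left.mp hxw hpx hq
    · refine ⟨hxw, b, hbx, q, hq, ?_, hx hbx, hw hq,
        Or.inr ⟨m, hm, ⟨a, ham, H.symm _ _ hab⟩, ⟨p, hpm, H.symm _ _ hpq⟩⟩⟩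
      rintro rfl
      exact Finset.disjoint_left.mp hxw hbx hq
  · rintro ⟨hd, p, hp, q, hq, -, -, -, hpq | ⟨m, hm, ⟨u, hu, hpu⟩, ⟨u', hu', hqu'⟩⟩⟩
    · exact ⟨disjoint_tildeT hw hd, p, subset_tildeT x hp, q, hq, hpq⟩
    · have hmx : m ⊆ tildeT H U x := subset_tildeT_of_linked hm
        ⟨(disjoint_gammaStar_verts hm).mono_right hx, u, hu, p, hp, H.symm _ _ hpu⟩
      exact ⟨disjoint_tildeT hw hd, u', hmx hu', q, hq, H.symm _ _ hqu'⟩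

theorem farApart_tildeT_of_not_linked (hU : IsTubing H U) {m x : Finset ℕ}
    (hm : m ∈ MaxtP H U) (hx : x ⊆ (gammaStar H U).verts) (h : ¬ Linked H m x) :
    FarApart H m (tildeT H U x) := by
  rw [tildeT, farApart_union_right, farApart_biUnion_right]
  refine ⟨farApart_iff_not_linked.mpr ⟨(disjoint_gammaStar_verts hm).mono_right hx, h⟩,
    fun m' hm' => ?_⟩
  obtain ⟨hm'M, hm'x⟩ := Finset.mem_filter.mp hm'
  exact hU.farApart_of_mem_maxtP hm hm'M (by rintro rfl; exact h hm'x)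

theorem compatible_tildeT_of_mem_properTubes (hU : IsTubing H U) {r x : Finset ℕ}
    (hr : r ∈ properTubes H U) (hx : x ⊆ (gammaStar H U).verts) :
    Compatible H r (tildeT H U x) := by
  obtain ⟨m, hm, hrm⟩ := exists_mem_maxtP_superset hr
  by_cases hmx : Linked H m x
  · exact Or.inl (hrm.trans (subset_tildeT_of_linked hm hmx))
  · exact Or.inr (Or.inr ((farApart_tildeT_of_not_linked hU hm hx hmx).mono_left hrm))

theorem not_linked_of_farApart_gammaStar {x x' m : Finset ℕ}
    (hx : x ⊆ (gammaStar H U).verts) (hx' : x' ⊆ (gammaStar H U).verts)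
    (h : FarApart (gammaStar H U) x x') (hm : m ∈ MaxtP H U) (hmx : Linked H m x) :
    ¬ Linked H m x' := fun hmx' =>
  (farApart_iff_not_linked.mp h).2 <| (linked_tildeT_iff hx hx').mp <|
    hmx'.mono_left (subset_tildeT_of_linked hm hmx) (disjoint_tildeT hx' h.1)

theorem farApart_tildeT_tildeT (hU : IsTubing H U) {x x' : Finset ℕ}
    (hx : x ⊆ (gammaStar H U).verts) (hx' : x' ⊆ (gammaStar H U).verts)
    (h : FarApart (gammaStar H U) x x') :
    FarApart H (tildeT H U x) (tildeT H U x') := by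
  have hfar : FarApart H x (tildeT H U x') := by
    refine FarApart.symm ?_
    rw [tildeT.eq_1 H U x', farApart_union_left, farApart_biUnion_left]
    refine ⟨(h.of_gammaStar hx hx').symm, fun m' hm' => ?_⟩
    obtain ⟨hm'M, hm'x'⟩ := Finset.mem_filter.mp hm'
    exact farApart_iff_not_linked.mpr ⟨(disjoint_gammaStar_verts hm'M).mono_right hx,
      not_linked_of_farApart_gammaStar hx' hx h.symm hm'M hm'x'⟩
  rw [tildeT.eq_1 H U x, farApart_union_left, farApart_biUnion_left]
  refine ⟨hfar, fun m hm => ?_⟩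
  obtain ⟨hmM, hmx⟩ := Finset.mem_filter.mp hm
  exact farApart_tildeT_of_not_linked hU hmM hx'
    (not_linked_of_farApart_gammaStar hx hx' h hmM hmx)

theorem compatible_tildeT_tildeT (hU : IsTubing H U) {x x' : Finset ℕ}
    (hx : x ⊆ (gammaStar H U).verts) (hx' : x' ⊆ (gammaStar H U).verts)
    (h : Compatible (gammaStar H U) x x') :
    Compatible H (tildeT H U x) (tildeT H U x') := by
  rcases h with h | h | h
  · exact Or.inl (tildeT_mono hx' h)
  · exact Or.inr (Or.inl (tildeT_mono hx h))
  · exact Or.inr (Or.inr (farApart_tildeT_tildeT hU hx hx' h))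

/-- The walk passes through the maximal tube responsible for the edge. -/
theorem reachIn_tildeT_of_adj (hU : IsTubing H U) {x : Finset ℕ}
    (hx : x ⊆ (gammaStar H U).verts) {a b : ℕ} (ha : a ∈ x) (hb : b ∈ x)
    (hab : (gammaStar H U).Adj a b) : ReachIn H (tildeT H U x) a b := by
  obtain ⟨-, -, -, hab | ⟨m, hm, ⟨u, hu, hau⟩, ⟨u', hu', hbu'⟩⟩⟩ := hab
  · exact .adj (subset_tildeT x ha) (subset_tildeT x hb) hab
  · have hmx : m ⊆ tildeT H U x := subset_tildeT_of_linked hm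
      ⟨(disjoint_gammaStar_verts hm).mono_right hx, u, hu, a, ha, H.symm _ _ hau⟩
    have huu' : ReachIn H m u u' := (hU.2.1 m (maxtP_subset hm)).2.2 u hu u' hu'
    exact ((ReachIn.adj (subset_tildeT x ha) (hmx hu) hau).trans (huu'.mono hmx)).trans
      (ReachIn.adj (hmx hu') (subset_tildeT x hb) (H.symm _ _ hbu'))

theorem isTube_tildeT (hU : IsTubing H U) {x : Finset ℕ} (hx : IsTube (gammaStar H U) x) :
    IsTube H (tildeT H U x) := by
  refine ⟨hx.1.mono (subset_tildeT x), tildeT_subset_verts hU hx.2.1,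
    vConn_of_reachIn (a := x) (fun v hv w hw => ?_) (fun v hv => ?_)⟩
  · exact Relation.ReflTransGen.lift' id
      (fun a b hab => reachIn_tildeT_of_adj hU hx.2.1 hab.1 hab.2.1 hab.2.2) _ _
      (hx.2.2 v hv w hw)
  · rcases mem_tildeT.mp hv with hvx | ⟨m, hm, hmx, hvm⟩
    · exact ⟨v, hvx, .refl⟩
    · have hmx' := subset_tildeT_of_linked hm hmx
      obtain ⟨-, p, hp, q, hq, hpq⟩ := hmx
      have hvp : ReachIn H m v p := (hU.2.1 m (maxtP_subset hm)).2.2 v hvm p hp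
      exact ⟨q, hq, (hvp.mono hmx').tail ⟨hmx' hp, subset_tildeT x hq, hpq⟩⟩

end Tilde

section SubstitutionTubing

variable {K : FinGraph} {S : Finset (Finset ℕ)} {s : Finset ℕ}

theorem mem_gammaSub {W : Finset (Finset ℕ)} {y : Finset ℕ} :
    y ∈ gammaSub K S s W ↔ y ∈ S ∨ ∃ w ∈ W, tildeT (induce K s) (restrictT S s) w = y := by
  simp only [gammaSub, substT, Finset.mem_union, Finset.mem_image]
  constructor
  · rintro (hy | hy | hy)
    exacts [Or.inl hy, Or.inl (mem_restrictT.mp hy).1, Or.inr hy]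
  · rintro (hy | hy)
    exacts [Or.inl hy, Or.inr (Or.inr hy)]

theorem compatible_tildeT_of_mem (hS : IsTubing K S) (hs : s ∈ S) {x w : Finset ℕ}
    (hx : x ∈ S) (hw : w ⊆ (gammaStar (induce K s) (restrictT S s)).verts) :
    Compatible K x (tildeT (induce K s) (restrictT S s) w) := by
  have hU := hS.restrictT hs
  have hws : tildeT (induce K s) (restrictT S s) w ⊆ s := tildeT_subset_verts hU hw
  by_cases hxs : x = s
  · exact Or.inr (Or.inl (hxs ▸ hws))
  rcases hS.2.2 x hx s hs hxs with hsub | hsub | hfar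
  · have hxp : x ∈ properTubes (induce K s) (restrictT S s) :=
      mem_properTubes.mpr ⟨mem_restrictT.mpr ⟨hx, hsub⟩, hxs⟩
    exact (compatible_induce_iff hsub hws).mp (compatible_tildeT_of_mem_properTubes hU hxp hw)
  · exact Or.inr (Or.inl (hws.trans hsub))
  · exact Or.inr (Or.inr (hfar.mono_right hws))

theorem gammaSub_isTubing (hS : IsTubing K S) (hs : s ∈ S) {W : Finset (Finset ℕ)}
    (hW : IsTubing (gammaStar (induce K s) (restrictT S s)) W) :
    IsTubing K (gammaSub K S s W) := by
  have hU := hS.restrictT hs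
  have hsK : s ⊆ K.verts := (hS.2.1 s hs).2.1
  have hW' : ∀ w ∈ W, w ⊆ (gammaStar (induce K s) (restrictT S s)).verts :=
    fun w hw => (hW.2.1 w hw).2.1
  have hWs : ∀ w ∈ W, tildeT (induce K s) (restrictT S s) w ⊆ s :=
    fun w hw => tildeT_subset_verts hU (hW' w hw)
  refine ⟨Finset.mem_union_left _ hS.1, fun y hy => ?_, fun y hy y' hy' hne => ?_⟩
  · rcases mem_gammaSub.mp hy with hy | ⟨w, hw, rfl⟩
    · exact hS.2.1 y hy
    · exact ((isTube_induce_iff hsK).mp (isTube_tildeT hU (hW.2.1 w hw))).1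
  rcases mem_gammaSub.mp hy with hy | ⟨w, hw, rfl⟩ <;>
    rcases mem_gammaSub.mp hy' with hy' | ⟨w', hw', rfl⟩
  · exact hS.2.2 y hy y' hy' hne
  · exact compatible_tildeT_of_mem hS hs hy (hW' w' hw')
  · exact (compatible_tildeT_of_mem hS hs hy' (hW' w hw)).symm
  · have hww' : w ≠ w' := by rintro rfl; exact hne rfl
    exact (compatible_induce_iff (hWs w hw) (hWs w' hw')).mp
      (compatible_tildeT_tildeT hU (hW' w hw) (hW' w' hw') (hW.2.2 w hw w' hw' hww'))

end SubstitutionTubing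

theorem mem_of_mem_maxtP_restrictT {K : FinGraph} {S : Finset (Finset ℕ)} {s m : Finset ℕ}
    (hm : m ∈ MaxtP (induce K s) (restrictT S s)) : m ∈ S ∧ m ⊆ s ∧ m ≠ s := by
  obtain ⟨hmS, hms⟩ := mem_restrictT.mp (maxtP_subset hm)
  exact ⟨hmS, hms, (mem_properTubes.mp (mem_maxtP.mp hm).1).2⟩

def substMaxt (H : FinGraph) (U S : Finset (Finset ℕ)) (s : Finset ℕ) : Finset (Finset ℕ) :=
  (MaxtP (induce (gammaStar H U) s) (restrictT S s)).image (tildeT H U) ∪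
    (MaxtP H U).filter (fun m => Linked H m s ∧
      ∀ m' ∈ MaxtP (induce (gammaStar H U) s) (restrictT S s), ¬ Linked H m m')

section Composition

variable {H : FinGraph} {U S : Finset (Finset ℕ)} {s : Finset ℕ}

theorem mem_restrictT_substT (hS : IsTubing (gammaStar H U) S) (hs : s ∈ S) {r : Finset ℕ} :
    r ∈ restrictT (substT H U S) (tildeT H U s) ↔
      (r ∈ U ∧ r ⊆ tildeT H U s) ∨ ∃ x ∈ S, x ⊆ s ∧ tildeT H U x = r := by
  have hsK : s ⊆ (gammaStar H U).verts := (hS.2.1 s hs).2.1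
  simp only [mem_restrictT, substT, Finset.mem_union, Finset.mem_image]
  constructor
  · rintro ⟨hrU | ⟨x, hx, rfl⟩, hr⟩
    · exact Or.inl ⟨hrU, hr⟩
    · exact Or.inr ⟨x, hx, (tildeT_subset_tildeT_iff (hS.2.1 x hx).2.1 hsK).mp hr, rfl⟩
  · rintro (⟨hrU, hr⟩ | ⟨x, hx, hxs, rfl⟩)
    · exact ⟨Or.inl hrU, hr⟩
    · exact ⟨Or.inr ⟨x, hx, rfl⟩, tildeT_mono hsK hxs⟩

theorem substMaxt_subset_properTubes (hS : IsTubing (gammaStar H U) S) (hs : s ∈ S) :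
    substMaxt H U S s ⊆
      properTubes (induce H (tildeT H U s)) (restrictT (substT H U S) (tildeT H U s)) := by
  have hsK : s ⊆ (gammaStar H U).verts := (hS.2.1 s hs).2.1
  intro c hc
  rw [mem_properTubes, mem_restrictT_substT hS hs]
  rcases Finset.mem_union.mp hc with hc | hc
  · obtain ⟨m', hm', rfl⟩ := Finset.mem_image.mp hc
    obtain ⟨hm'S, hm's, hm'ne⟩ := mem_of_mem_maxtP_restrictT hm'
    refine ⟨Or.inr ⟨m', hm'S, hm's, rfl⟩, fun h => hm'ne (hm's.antisymm ?_)⟩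
    exact (tildeT_subset_tildeT_iff hsK (hm's.trans hsK)).mp h.ge
  · obtain ⟨hm, hms, -⟩ := Finset.mem_filter.mp hc
    refine ⟨Or.inl ⟨maxtP_subset hm, subset_tildeT_of_linked hm hms⟩, fun h => ?_⟩
    obtain ⟨a, ha⟩ := (hS.2.1 s hs).1
    have ham : a ∈ c := by rw [h]; exact subset_tildeT s ha
    exact Finset.disjoint_left.mp (disjoint_gammaStar_verts hm) ham (hsK ha)

theorem exists_substMaxt_superset (hU : IsTubing H U) (hS : IsTubing (gammaStar H U) S)
    (hs : s ∈ S) {r : Finset ℕ}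
    (hr : r ∈ properTubes (induce H (tildeT H U s)) (restrictT (substT H U S) (tildeT H U s))) :
    ∃ c ∈ substMaxt H U S s, r ⊆ c := by
  have hsK : s ⊆ (gammaStar H U).verts := (hS.2.1 s hs).2.1
  rw [mem_properTubes, mem_restrictT_substT hS hs] at hr
  obtain ⟨⟨hrU, hrs⟩ | ⟨x, hx, hxs, rfl⟩, hne⟩ := hr
  · have hrp : r ∈ properTubes H U := mem_properTubes.mpr
      ⟨hrU, fun h => hne (hrs.antisymm (h ▸ tildeT_subset_verts hU hsK))⟩
    obtain ⟨m, hm, hms, hrm⟩ := exists_maxtP_linked_of_subset_tildeT hU hrp hsK hrs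
    by_cases hlk : ∃ m' ∈ MaxtP (induce (gammaStar H U) s) (restrictT S s), Linked H m m'
    · obtain ⟨m', hm', hmm'⟩ := hlk
      exact ⟨tildeT H U m', Finset.mem_union_left _ (Finset.mem_image_of_mem _ hm'),
        hrm.trans (subset_tildeT_of_linked hm hmm')⟩
    · push Not at hlk
      exact ⟨m, Finset.mem_union_right _ (Finset.mem_filter.mpr ⟨hm, hms, hlk⟩), hrm⟩
  · have hxp : x ∈ properTubes (induce (gammaStar H U) s) (restrictT S s) :=
      mem_properTubes.mpr ⟨mem_restrictT.mpr ⟨hx, hxs⟩, fun h => hne (h ▸ rfl)⟩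
    obtain ⟨m', hm', hxm'⟩ := exists_mem_maxtP_superset hxp
    exact ⟨tildeT H U m', Finset.mem_union_left _ (Finset.mem_image_of_mem _ hm'),
      tildeT_mono ((mem_of_mem_maxtP_restrictT hm').2.1.trans hsK) hxm'⟩

theorem substMaxt_antichain (hU : IsTubing H U) (hS : IsTubing (gammaStar H U) S)
    (hs : s ∈ S) {c c' : Finset ℕ} (hc : c ∈ substMaxt H U S s)
    (hc' : c' ∈ substMaxt H U S s) (hcc' : c ⊆ c') : c = c' := by
  have hK : ∀ m' ∈ MaxtP (induce (gammaStar H U) s) (restrictT S s),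
      m' ⊆ (gammaStar H U).verts :=
    fun m' hm' => (mem_of_mem_maxtP_restrictT hm').2.1.trans (hS.2.1 s hs).2.1
  rcases Finset.mem_union.mp hc with hc | hc <;> rcases Finset.mem_union.mp hc' with hc' | hc'
  · obtain ⟨m, hm, rfl⟩ := Finset.mem_image.mp hc
    obtain ⟨m', hm', rfl⟩ := Finset.mem_image.mp hc'
    rw [(mem_maxtP.mp hm).2 m' (mem_maxtP.mp hm').1
      ((tildeT_subset_tildeT_iff (hK m hm) (hK m' hm')).mp hcc')]
  · obtain ⟨m', hm', rfl⟩ := Finset.mem_image.mp hc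
    obtain ⟨a, ha⟩ := (hS.2.1 m' (mem_of_mem_maxtP_restrictT hm').1).1
    exact absurd (hK m' hm' ha) (Finset.disjoint_left.mp
      (disjoint_gammaStar_verts (Finset.mem_filter.mp hc').1) (hcc' (subset_tildeT m' ha)))
  · obtain ⟨m', hm', rfl⟩ := Finset.mem_image.mp hc'
    obtain ⟨hm, -, hnot⟩ := Finset.mem_filter.mp hc
    exact absurd (linked_of_subset_tildeT hU hm (hK m' hm') hcc') (hnot m' hm')
  · exact (mem_maxtP.mp (Finset.mem_filter.mp hc).1).2 c'
      (mem_maxtP.mp (Finset.mem_filter.mp hc').1).1 hcc'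

theorem maxtP_restrictT_substT (hU : IsTubing H U) (hS : IsTubing (gammaStar H U) S)
    (hs : s ∈ S) :
    MaxtP (induce H (tildeT H U s)) (restrictT (substT H U S) (tildeT H U s)) =
      substMaxt H U S s :=
  maxtP_eq_of_cofinal (substMaxt_subset_properTubes hS hs)
    (fun _ hr => exists_substMaxt_superset hU hS hs hr)
    (fun _ hc _ hc' => substMaxt_antichain hU hS hs hc hc')

theorem mem_tildeT_restrictT_substT (hU : IsTubing H U) (hS : IsTubing (gammaStar H U) S)
    (hs : s ∈ S) {w : Finset ℕ} (hw : w ⊆ tildeT H U s) {a : ℕ} :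
    a ∈ tildeT (induce H (tildeT H U s)) (restrictT (substT H U S) (tildeT H U s)) w ↔
      a ∈ w ∨ ∃ c ∈ substMaxt H U S s, Linked H c w ∧ a ∈ c := by
  rw [mem_tildeT, maxtP_restrictT_substT hU hS hs]
  refine or_congr_right (exists_congr fun c => and_congr_right fun hc => and_congr_left' ?_)
  exact linked_induce_iff (mem_restrictT.mp (mem_properTubes.mp
    (substMaxt_subset_properTubes hS hs hc)).1).2 hw

theorem linked_tildeT_iff_of_mem_maxtP (hS : IsTubing (gammaStar H U) S) (hs : s ∈ S)
    {m' w : Finset ℕ} (hm' : m' ∈ MaxtP (induce (gammaStar H U) s) (restrictT S s))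
    (hw : w ⊆ s) :
    Linked H (tildeT H U m') w ↔ Linked (induce (gammaStar H U) s) m' w := by
  have hm's := (mem_of_mem_maxtP_restrictT hm').2.1
  have hsK := (hS.2.1 s hs).2.1
  exact (linked_tildeT_iff (hm's.trans hsK) (hw.trans hsK)).trans (linked_induce_iff hm's hw).symm

theorem exists_substMaxt_of_linked (hS : IsTubing (gammaStar H U) S) (hs : s ∈ S)
    {w : Finset ℕ} (hw : w ⊆ (gammaStar (induce (gammaStar H U) s) (restrictT S s)).verts)
    {m : Finset ℕ} (hm : m ∈ MaxtP H U)
    (h : Linked H m (tildeT (induce (gammaStar H U) s) (restrictT S s) w)) :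
    ∃ c ∈ substMaxt H U S s, Linked H c w ∧ m ⊆ c := by
  have hws : w ⊆ s := hw.trans gammaStar_verts_subset
  have hsK : s ⊆ (gammaStar H U).verts := (hS.2.1 s hs).2.1
  have hm'K : ∀ m' ∈ MaxtP (induce (gammaStar H U) s) (restrictT S s),
      m' ⊆ (gammaStar H U).verts :=
    fun m' hm' => (mem_of_mem_maxtP_restrictT hm').2.1.trans hsK
  have hcand : ∀ m' ∈ MaxtP (induce (gammaStar H U) s) (restrictT S s),
      Linked H (tildeT H U m') w → Linked H m m' →
        ∃ c ∈ substMaxt H U S s, Linked H c w ∧ m ⊆ c :=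
    fun m' hm' hm'w hmm' => ⟨tildeT H U m', Finset.mem_union_left _
      (Finset.mem_image_of_mem _ hm'), hm'w, subset_tildeT_of_linked hm hmm'⟩
  obtain ⟨-, p, hpm, u, hu, hpu⟩ := h
  rcases mem_tildeT.mp hu with huw | ⟨m', hm', hm'w, hum'⟩
  · have hmw : Linked H m w :=
      ⟨(disjoint_gammaStar_verts hm).mono_right (hws.trans hsK), p, hpm, u, huw, hpu⟩
    by_cases hlk : ∃ m' ∈ MaxtP (induce (gammaStar H U) s) (restrictT S s), Linked H m m'
    · obtain ⟨m', hm', hmm'⟩ := hlk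
      exact hcand m' hm' (hmw.mono_left (subset_tildeT_of_linked hm hmm')
        (disjoint_tildeT (hws.trans hsK) ((disjoint_gammaStar_verts hm').mono_right hw))) hmm'
    · push Not at hlk
      refine ⟨m, Finset.mem_union_right _ (Finset.mem_filter.mpr ⟨hm, ?_, hlk⟩), hmw, subset_rfl⟩
      exact hmw.mono_right hws ((disjoint_gammaStar_verts hm).mono_right hsK)
  · exact hcand m' hm' ((linked_tildeT_iff_of_mem_maxtP hS hs hm' hws).mpr hm'w)
      ⟨(disjoint_gammaStar_verts hm).mono_right (hm'K m' hm'), p, hpm, u, hum', hpu⟩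

theorem tildeT_tildeT (hU : IsTubing H U) (hS : IsTubing (gammaStar H U) S) (hs : s ∈ S)
    {w : Finset ℕ} (hw : w ⊆ (gammaStar (induce (gammaStar H U) s) (restrictT S s)).verts) :
    tildeT H U (tildeT (induce (gammaStar H U) s) (restrictT S s) w) =
      tildeT (induce H (tildeT H U s)) (restrictT (substT H U S) (tildeT H U s)) w := by
  have hws : w ⊆ s := hw.trans gammaStar_verts_subset
  have hwK : tildeT (induce (gammaStar H U) s) (restrictT S s) w ⊆ (gammaStar H U).verts :=
    (tildeT_subset_verts (hS.restrictT hs) hw).trans (hS.2.1 s hs).2.1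
  ext a
  rw [mem_tildeT_restrictT_substT hU hS hs (hws.trans (subset_tildeT s))]
  constructor
  · intro ha
    rcases mem_tildeT.mp ha with ha | ⟨m, hm, hmw, ham⟩
    · rcases mem_tildeT.mp ha with haw | ⟨m', hm', hm'w, ham'⟩
      · exact Or.inl haw
      · exact Or.inr ⟨tildeT H U m', Finset.mem_union_left _ (Finset.mem_image_of_mem _ hm'),
          (linked_tildeT_iff_of_mem_maxtP hS hs hm' hws).mpr hm'w, subset_tildeT m' ham'⟩
    · obtain ⟨c, hc, hcw, hmc⟩ := exists_substMaxt_of_linked hS hs hw hm hmw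
      exact Or.inr ⟨c, hc, hcw, hmc ham⟩
  · rintro (haw | ⟨c, hc, hcw, hac⟩)
    · exact subset_tildeT _ (subset_tildeT w haw)
    rcases Finset.mem_union.mp hc with hc | hc
    · obtain ⟨m', hm', rfl⟩ := Finset.mem_image.mp hc
      exact tildeT_mono hwK (subset_tildeT_of_linked hm'
        ((linked_tildeT_iff_of_mem_maxtP hS hs hm' hws).mp hcw)) hac
    · have hcM := (Finset.mem_filter.mp hc).1
      exact subset_tildeT_of_linked hcM (hcw.mono_right (subset_tildeT w)
        ((disjoint_gammaStar_verts hcM).mono_right hwK)) hac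

theorem substT_gammaSub (hU : IsTubing H U) (hS : IsTubing (gammaStar H U) S) (hs : s ∈ S)
    {W : Finset (Finset ℕ)}
    (hW : IsTubing (gammaStar (induce (gammaStar H U) s) (restrictT S s)) W) :
    substT H U (gammaSub (gammaStar H U) S s W) =
      gammaSub H (substT H U S) (tildeT H U s) W := by
  have hcomp : W.image (tildeT H U ∘ tildeT (induce (gammaStar H U) s) (restrictT S s)) =
      W.image (tildeT (induce H (tildeT H U s)) (restrictT (substT H U S) (tildeT H U s))) :=
    Finset.image_congr fun w hw => tildeT_tildeT hU hS hs (hW.2.1 w hw).2.1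
  have hS' : (restrictT S s).image (tildeT H U) ⊆ S.image (tildeT H U) :=
    Finset.image_subset_image (Finset.filter_subset _ _)
  have hR : restrictT (substT H U S) (tildeT H U s) ⊆ substT H U S := Finset.filter_subset _ _
  simp only [gammaSub, substT, Finset.image_union, Finset.image_image, hcomp] at hR ⊢
  ext r
  have hSr := @hS' r
  have hRr := @hR r
  simp only [Finset.mem_union] at *
  tauto

end Composition

end CDTub

open CDTub in
theorem subst_assoc_general (G : FinGraph)
    (T : Finset (Finset ℕ)) (hT : IsTubing G T) (t : Finset ℕ) (ht : t ∈ T)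
    (S : Finset (Finset ℕ))
    (hS : IsTubing (gammaStar (induce G t) (restrictT T t)) S)
    (s : Finset ℕ) (hs : s ∈ S)
    (W : Finset (Finset ℕ))
    (hW : IsTubing (gammaStar (induce (gammaStar (induce G t) (restrictT T t)) s)
      (restrictT S s)) W) :
    IsTubing (gammaStar (induce G t) (restrictT T t))
      (gammaSub (gammaStar (induce G t) (restrictT T t)) S s W) ∧
    gammaSub G T t (gammaSub (gammaStar (induce G t) (restrictT T t)) S s W) =
      gammaSub G (gammaSub G T t S) (tildeT (induce G t) (restrictT T t) s) W := by
  have hU := hT.restrictT ht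
  refine ⟨gammaSub_isTubing hS hs hW, ?_⟩
  set st := tildeT (induce G t) (restrictT T t) s
  have hst : st ⊆ t := tildeT_subset_verts hU (hS.2.1 s hs).2.1
  -- the tubes of `T` inside `s̃ ⊆ t` already belong to `T|_t`
  have hTst : restrictT T st ⊆ restrictT (substT (induce G t) (restrictT T t) S) st :=
    fun r hr => mem_restrictT.mpr ⟨Finset.mem_union_left _ (mem_restrictT.mpr
      ⟨(mem_restrictT.mp hr).1, (mem_restrictT.mp hr).2.trans hst⟩), (mem_restrictT.mp hr).2⟩
  calc gammaSub G T t (gammaSub (gammaStar (induce G t) (restrictT T t)) S s W)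
      = T ∪ substT (induce G t) (restrictT T t)
          (gammaSub (gammaStar (induce G t) (restrictT T t)) S s W) := rfl
    _ = T ∪ gammaSub (induce G t) (substT (induce G t) (restrictT T t) S) st W := by
      rw [substT_gammaSub hU hS hs hW]
    _ = gammaSub G (gammaSub G T t S) st W := by
      rw [gammaSub, gammaSub, gammaSub, induce_induce hst, restrictT_union,
        Finset.union_eq_right.mpr hTst, Finset.union_assoc]

open CDTub in
/-- Associativity of substitution: for a tubing `W` of `(((Γ_t)_{T|_t}^*)_s)_{S|_s}^*`,
the family `γ_s(S;W)` is a tubing of `(Γ_t)_{T|_t}^*` and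
`γ_t(T;γ_s(S;W)) = γ_{s̃}(γ_t(T;S);W)`. -/
theorem subst_assoc (G : FinGraph) (hc : IsConnGraph G)
    (T : Finset (Finset ℕ)) (hT : IsTubing G T) (t : Finset ℕ) (ht : t ∈ T)
    (S : Finset (Finset ℕ))
    (hS : IsTubing (gammaStar (induce G t) (restrictT T t)) S)
    (s : Finset ℕ) (hs : s ∈ S)
    (hsp : s ≠ (gammaStar (induce G t) (restrictT T t)).verts)
    (W : Finset (Finset ℕ))
    (hW : IsTubing (gammaStar (induce (gammaStar (induce G t) (restrictT T t)) s)
      (restrictT S s)) W) :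
    IsTubing (gammaStar (induce G t) (restrictT T t))
      (gammaSub (gammaStar (induce G t) (restrictT T t)) S s W) ∧
    gammaSub G T t (gammaSub (gammaStar (induce G t) (restrictT T t)) S s W) =
      gammaSub G (gammaSub G T t S) (tildeT (induce G t) (restrictT T t) s) W :=
  subst_assoc_general G T hT t ht S hS s hs W hW
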